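/- Let ψ_j(x) = Σ_{k=1}^{p} exp(Σ_i -ξ_{ijk} x_i) with ξ_{ijk} ≥ 0, and let x̂ ∈ ℝ^n with x̂ ≥ 0 and b_j = ψ_j(x̂). Then the function g(x) = (1/(2μ)) Σ_{j=1}^{m} (ψ_j(x) − b_j)^2 is convex on the box {x ∈ ℝ^n : 0 ≤ x ≤ x̂} (coordinatewise inequalities). -/

import Mathlib

/-! Each `ψ j` is a sum of exponentials of linear forms, hence convex, and it is antitone because
`ξ ≥ 0`; so on the box `ψ j ≥ ψ j x̂ = b j`. Squaring preserves convexity of the nonnegative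
convex function `ψ j - b j`, since `t ↦ t ^ 2` is convex and nondecreasing on `[0, ∞)`. -/

open Real Set

theorem ConvexOn.sum {𝕜 E β ι : Type*} [Semiring 𝕜] [PartialOrder 𝕜] [AddCommMonoid E]
    [AddCommMonoid β] [PartialOrder β] [IsOrderedAddMonoid β] [SMul 𝕜 E] [Module 𝕜 β]
    {s : Set E} {t : Finset ι} {f : ι → E → β} (hs : Convex 𝕜 s)
    (hf : ∀ i ∈ t, ConvexOn 𝕜 s (f i)) : ConvexOn 𝕜 s fun x => ∑ i ∈ t, f i x := by
  classical
  induction t using Finset.induction_on with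
  | empty => simpa using convexOn_const (0 : β) hs
  | insert i t hi ih =>
    simp only [Finset.sum_insert hi]
    exact (hf i (t.mem_insert_self i)).add (ih fun j hj => hf j (Finset.mem_insert_of_mem hj))

theorem ConvexOn.sq_sub_of_le {𝕜 E : Type*} [CommRing 𝕜] [LinearOrder 𝕜] [IsStrictOrderedRing 𝕜]
    [AddCommGroup E] [Module 𝕜 E] {s : Set E} {f : E → 𝕜} {b : 𝕜} (hf : ConvexOn 𝕜 s f)
    (hb : ∀ x ∈ s, b ≤ f x) : ConvexOn 𝕜 s fun x => (f x - b) ^ 2 :=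
  (hf.sub (concaveOn_const b hf.1)).pow (fun x hx => sub_nonneg.2 (hb x hx)) 2

theorem convexOn_exp_sum_mul {ι : Type*} [Fintype ι] (c : ι → ℝ) :
    ConvexOn ℝ univ fun x : ι → ℝ => exp (∑ i, c i * x i) := by
  simpa [Fintype.linearCombination_apply, mul_comm, Function.comp_def] using
    convexOn_exp.comp_linearMap (Fintype.linearCombination ℝ c)

theorem antitone_sum_exp_sum_neg_mul {ι κ : Type*} [Fintype ι] [Fintype κ] {ξ : ι → κ → ℝ}
    (hξ : ∀ i k, 0 ≤ ξ i k) : Antitone fun x : ι → ℝ => ∑ k, exp (∑ i, -ξ i k * x i) :=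
  fun _ _ hxy => Finset.sum_le_sum fun k _ => exp_le_exp.2 <| Finset.sum_le_sum fun i _ =>
    mul_le_mul_of_nonpos_left (hxy i) (neg_nonpos.2 (hξ i k))

theorem g_convex_on_box_general (m n p : ℕ)
    (μ : ℝ) (hμ : 0 < μ)
    (ξ : Fin n → Fin m → Fin p → ℝ) (hξ : ∀ i j k, 0 ≤ ξ i j k)
    (xhat : Fin n → ℝ)
    (ψ : Fin m → (Fin n → ℝ) → ℝ)
    (hψ : ∀ j x, ψ j x = ∑ k : Fin p, Real.exp (∑ i : Fin n, -ξ i j k * x i))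
    (b : Fin m → ℝ) (hb : ∀ j, b j = ψ j xhat) :
    ConvexOn ℝ {x : Fin n → ℝ | ∀ i, 0 ≤ x i ∧ x i ≤ xhat i}
      (fun x => (1 / (2 * μ)) * ∑ j : Fin m, (ψ j x - b j) ^ 2) := by
  have hbox : {x : Fin n → ℝ | ∀ i, 0 ≤ x i ∧ x i ≤ xhat i} = Icc 0 xhat := by
    ext x
    simp [Pi.le_def, forall_and]
  rw [hbox]
  have hψ_convex (j : Fin m) : ConvexOn ℝ (Icc 0 xhat) (ψ j) := by
    rw [funext (hψ j)]
    exact (ConvexOn.sum convex_univ fun k _ => convexOn_exp_sum_mul _).subset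
      (subset_univ _) (convex_Icc 0 xhat)
  have hb_le (j : Fin m) (x) (hx : x ∈ Icc 0 xhat) : b j ≤ ψ j x := by
    rw [hb, funext (hψ j)]
    exact antitone_sum_exp_sum_neg_mul (fun i k => hξ i j k) hx.2
  simpa only [smul_eq_mul] using
    (ConvexOn.sum (convex_Icc 0 xhat) fun j _ => (hψ_convex j).sq_sub_of_le (hb_le j)).smul
      (by positivity : (0 : ℝ) ≤ 1 / (2 * μ))

theorem g_convex_on_box (m n p : ℕ) (hm : 0 < m) (hn : 0 < n) (hp : 0 < p)
    (μ : ℝ) (hμ : 0 < μ)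
    (ξ : Fin n → Fin m → Fin p → ℝ) (hξ : ∀ i j k, 0 ≤ ξ i j k)
    (xhat : Fin n → ℝ) (hxhat : ∀ i, 0 ≤ xhat i)
    (ψ : Fin m → (Fin n → ℝ) → ℝ)
    (hψ : ∀ j x, ψ j x = ∑ k : Fin p, Real.exp (∑ i : Fin n, -ξ i j k * x i))
    (b : Fin m → ℝ) (hb : ∀ j, b j = ψ j xhat) :
    ConvexOn ℝ {x : Fin n → ℝ | ∀ i, 0 ≤ x i ∧ x i ≤ xhat i}
      (fun x => (1 / (2 * μ)) * ∑ j : Fin m, (ψ j x - b j) ^ 2) :=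
  g_convex_on_box_general m n p μ hμ ξ hξ xhat ψ hψ b hb
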